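/- arXiv:2311.06562 — 6 statements merged into one kernel-verified Lean document; each statement's English description precedes it below -/
import Mathlib

section
/- Let p be a prime number. In the commutative ring ℤ[X]/(X^p − 1), let ξ denote the image of the polynomial ∏_{ℓ=1}^{p−1} (1 − X^ℓ). Then ξ² = p·ξ. -/
/-!
Write `σ = 1 + X + ⋯ + X^(p-1)`. Modulo `X^p - 1` we have `ξ + σ ≡ p`: this can be checked at
the `p`-th roots of unity in `ℂ`, where at `1` the product `ξ` vanishes and `σ = p`, while at a
primitive root `ζ` the sum `σ` vanishes and `∏ (1 - ζ^ℓ) = p`. Moreover `ξ σ ≡ 0`, since `ξ` has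
the factor `1 - X` and `(1 - X) σ = 1 - X^p`. Hence `ξ² = ξ (p - σ) = p ξ`.
-/

open Polynomial Finset

theorem prod_one_sub_pow_add_geom_sum_of_pow_eq_one {K : Type*} [CommRing K] [IsDomain K]
    {p : ℕ} (hp : p.Prime) {η : K} (hη : η ^ p = 1) :
    ∏ k ∈ range (p - 1), (1 - η ^ (k + 1)) + ∑ i ∈ range p, η ^ i = p := by
  obtain ⟨n, rfl⟩ : ∃ n, p = n + 1 := ⟨p - 1, (Nat.sub_add_cancel hp.one_le).symm⟩
  rw [Nat.add_sub_cancel]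
  rcases (mem_nthRootsFinset_iff_of_prime hp).1
    ((mem_nthRootsFinset n.succ_pos 1).2 hη) with hprim | rfl
  · rw [hprim.prod_one_sub_pow_eq_order, hprim.geom_sum_eq_zero hp.one_lt, add_zero,
      Nat.cast_succ]
  · have hn : n ≠ 0 := by have := hp.two_le; omega
    simp [hn]

theorem X_pow_sub_one_dvd_prod_one_sub_X_pow_add_geom_sum {p : ℕ} (hp : p.Prime) :
    (X ^ p - 1 : ℤ[X]) ∣
      ∏ k ∈ range (p - 1), (1 - X ^ (k + 1)) + ∑ i ∈ range p, X ^ i - (p : ℤ[X]) := by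
  obtain ⟨μ, hμ⟩ : ∃ μ : ℂ, IsPrimitiveRoot μ p :=
    ⟨_, Complex.isPrimitiveRoot_exp p hp.ne_zero⟩
  have hmonic : (X ^ p - 1 : ℤ[X]).Monic := monic_X_pow_sub_C 1 hp.ne_zero
  rw [← map_dvd_map (algebraMap ℤ ℂ) (algebraMap ℤ ℂ).injective_int hmonic, Polynomial.map_sub,
    Polynomial.map_pow, map_X, Polynomial.map_one, X_pow_sub_one_eq_prod hp.pos hμ]
  refine prod_dvd_of_coprime (fun a _ b _ hab ↦ pairwise_coprime_X_sub_C Function.injective_id hab)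
    fun η hη ↦ dvd_iff_isRoot.2 ?_
  rw [IsRoot.def, eval_map_algebraMap]
  simp only [map_sub, map_add, map_prod, map_sum, map_pow, aeval_X, map_one, map_natCast]
  rw [prod_one_sub_pow_add_geom_sum_of_pow_eq_one hp ((mem_nthRootsFinset hp.pos 1).1 hη), sub_self]

theorem X_pow_sub_one_dvd_prod_one_sub_X_pow_mul_geom_sum {R : Type*} [CommRing R] {n : ℕ}
    (hn : n ≠ 0) (p : ℕ) :
    (X ^ p - 1 : R[X]) ∣ (∏ k ∈ range n, (1 - X ^ (k + 1))) * ∑ i ∈ range p, X ^ i := by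
  obtain ⟨m, rfl⟩ := Nat.exists_eq_succ_of_ne_zero hn
  refine Dvd.intro (-∏ k ∈ range m, (1 - X ^ (k + 2))) ?_
  rw [prod_range_succ', ← geom_sum_mul]
  ring

theorem prod_Icc_one_eq_prod_range {M : Type*} [CommMonoid M] (f : ℕ → M) (n : ℕ) :
    ∏ ℓ ∈ Icc 1 n, f ℓ = ∏ k ∈ range n, f (k + 1) := by
  rw [range_eq_Ico, prod_Ico_add', zero_add, Ico_add_one_right_eq_Icc]

/-- In the commutative ring `ℤ[X]/(X^p − 1)`, the image `ξ` of the polynomial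
`∏_{ℓ=1}^{p−1} (1 − X^ℓ)` satisfies `ξ² = p·ξ`. -/
theorem stmt0 (p : ℕ) (hp : p.Prime)
    (ξ : Polynomial ℤ ⧸ Ideal.span {(Polynomial.X : Polynomial ℤ) ^ p - 1})
    (hξ : ξ = Ideal.Quotient.mk (Ideal.span {(Polynomial.X : Polynomial ℤ) ^ p - 1})
      (∏ ℓ ∈ Finset.Icc 1 (p - 1), (1 - Polynomial.X ^ ℓ))) :
    ξ ^ 2 = (p : Polynomial ℤ ⧸ Ideal.span {(Polynomial.X : Polynomial ℤ) ^ p - 1}) * ξ := by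
  rw [hξ, ← map_pow, ← map_natCast (Ideal.Quotient.mk _) p, ← map_mul, Ideal.Quotient.eq,
    Ideal.mem_span_singleton, prod_Icc_one_eq_prod_range]
  have hsum := X_pow_sub_one_dvd_prod_one_sub_X_pow_add_geom_sum hp
  have hprod := X_pow_sub_one_dvd_prod_one_sub_X_pow_mul_geom_sum (R := ℤ)
    (Nat.sub_ne_zero_of_lt hp.one_lt) p
  set f : ℤ[X] := ∏ k ∈ range (p - 1), (1 - X ^ (k + 1))
  convert (dvd_mul_of_dvd_right hsum f).sub hprod using 1
  ring
end

section
/- Let G be a finite group and let g ∈ G be an element such that the cyclic subgroup generated by g is a proper subgroup of G. Let T_g be the ℂ-linear endomorphism of V given by (T_g f)(x) = f(g⁻¹x). Then det(id_V − T_g) = 0. In particular, if G is finite and not cyclic, then det(id_V − T_g) = 0 for every g ∈ G. -/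
open scoped BigOperators

/-- Let `V = {f : G → ℂ | ∑ f = 0}` with `G` acting by left translation. If the cyclic
subgroup generated by `g` is proper, then the endomorphism `T_g` of `V` given by
`(T_g f)(x) = f(g⁻¹x)` satisfies `det(id_V − T_g) = 0`. In particular, if `G` is finite
and not cyclic, this holds for every `g ∈ G`. -/
theorem stmt5 (G : Type*) [Group G] [Fintype G]
    (V : Submodule ℂ (G → ℂ)) (hV : ∀ f : G → ℂ, f ∈ V ↔ ∑ x : G, f x = 0) :
    (∀ g : G, Subgroup.zpowers g ≠ ⊤ →
      ∀ T : V →ₗ[ℂ] V, (∀ (f : V) (x : G), (T f : G → ℂ) x = (f : G → ℂ) (g⁻¹ * x)) →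
        LinearMap.det ((LinearMap.id : V →ₗ[ℂ] V) - T) = 0) ∧
    (¬ IsCyclic G →
      ∀ (g : G) (T : V →ₗ[ℂ] V),
        (∀ (f : V) (x : G), (T f : G → ℂ) x = (f : G → ℂ) (g⁻¹ * x)) →
        LinearMap.det ((LinearMap.id : V →ₗ[ℂ] V) - T) = 0) := by
  classical
  have main : ∀ g : G, Subgroup.zpowers g ≠ ⊤ →
      ∀ T : V →ₗ[ℂ] V, (∀ (f : V) (x : G), (T f : G → ℂ) x = (f : G → ℂ) (g⁻¹ * x)) →
        LinearMap.det ((LinearMap.id : V →ₗ[ℂ] V) - T) = 0 := by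
    intro g hg T hT
    -- pick y outside zpowers g
    obtain ⟨y, hy⟩ : ∃ y : G, y ∉ Subgroup.zpowers g := by
      by_contra h
      push_neg at h
      exact hg ((Subgroup.eq_top_iff' _).mpr h)
    set H := Subgroup.zpowers g with hH
    -- the fixed vector
    set f₀ : G → ℂ := fun x =>
      (if x ∈ H then (1 : ℂ) else 0) - (if x * y⁻¹ ∈ H then (1 : ℂ) else 0) with hf₀
    have hsum : ∑ x : G, f₀ x = 0 := by
      have h2 : ∑ x : G, (if x * y⁻¹ ∈ H then (1 : ℂ) else 0)
          = ∑ x : G, (if x ∈ H then (1 : ℂ) else 0) := by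
        refine Fintype.sum_equiv (Equiv.mulRight y⁻¹) _ _ ?_
        intro x
        rfl
      simp [hf₀, Finset.sum_sub_distrib, h2]
    have hfV : f₀ ∈ V := (hV f₀).mpr hsum
    set fv : V := ⟨f₀, hfV⟩ with hfv
    have hfv0 : fv ≠ 0 := by
      intro h
      have h1 : f₀ 1 = 0 := by
        have := congrArg (fun u : V => (u : G → ℂ) 1) h
        simpa using this
      have : f₀ 1 = 1 := by
        have hy' : (1 : G) * y⁻¹ ∉ H := by
          intro h
          exact hy (by simpa using H.inv_mem h)
        simp [hf₀, H.one_mem, hy]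
      rw [this] at h1
      exact one_ne_zero h1
    -- fv is fixed by T
    have hfix : ((LinearMap.id : V →ₗ[ℂ] V) - T) fv = 0 := by
      have : T fv = fv := by
        ext x
        rw [hT fv x]
        have hmem : g⁻¹ * x ∈ H ↔ x ∈ H := by
          constructor
          · intro h; simpa using H.mul_mem (Subgroup.mem_zpowers g) h
          · intro h; exact H.mul_mem (H.inv_mem (Subgroup.mem_zpowers g)) h
        have hmem2 : (g⁻¹ * x) * y⁻¹ ∈ H ↔ x * y⁻¹ ∈ H := by
          rw [mul_assoc]
          constructor
          · intro h
            have := H.mul_mem (Subgroup.mem_zpowers g) h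
            simpa [← mul_assoc] using this
          · intro h; exact H.mul_mem (H.inv_mem (Subgroup.mem_zpowers g)) h
        simp only [hfv, hf₀]
        rw [if_congr hmem rfl rfl, if_congr hmem2 rfl rfl]
      simp [this]
    -- conclude det = 0
    by_contra hdet
    have := (LinearMap.equivOfDetNeZero _ hdet).injective
    have h0 : ((LinearMap.id : V →ₗ[ℂ] V) - T) fv
        = ((LinearMap.id : V →ₗ[ℂ] V) - T) 0 := by simp [hfix]
    exact hfv0 (by simpa using this h0)
  refine ⟨main, fun hnc g T hT => main g ?_ T hT⟩
  intro htop
  exact hnc ⟨⟨g, fun x => by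
    have : x ∈ Subgroup.zpowers g := htop ▸ Subgroup.mem_top x
    exact this⟩⟩
end

section
/- Let G be a finite group acting on a unital ring B by ring automorphisms g ↦ σ_g, and let (p_g)_{g∈G} be a family of central idempotents of B such that p_g·p_h = 0 for g ≠ h, ∑_{g∈G} p_g = 1, and σ_g(p_h) = p_{gh} for all g, h ∈ G. Then the map Φ from the ring of functions G → p_e·B (with pointwise operations, where p_e·B is a ring with unit p_e and e is the identity of G) to B defined by Φ(f) = ∑_{g∈G} p_g · σ_g(f(g)) is a bijective ring homomorphism; moreover Φ is G-equivariant in the sense that σ_{g'}(Φ(f)) = Φ(g ↦ f(g'⁻¹g)) for all g' ∈ G and f : G → p_e·B. -/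
open scoped BigOperators

/-- Let a finite group `G` act on a unital ring `B` by ring automorphisms `σ`, and
let `(p_g)` be an orthogonal family of central idempotents summing to `1` with
`σ_g(p_h) = p_{gh}`. Then `Φ(f) = ∑_g p_g·σ_g(f(g))` is a bijective ring homomorphism
from the ring of functions `G → p_e·B` (pointwise operations, unit the constant
function `p_e`) onto `B`, and `Φ` is `G`-equivariant:
`σ_{g'}(Φ(f)) = Φ(g ↦ f(g'⁻¹g))`. -/
theorem stmt12 (G : Type*) [Group G] [Fintype G] (B : Type*) [Ring B]
    (σ : G →* RingAut B) (p : G → B)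
    (hcentral : ∀ (g : G) (b : B), p g * b = b * p g)
    (hidem : ∀ g : G, p g * p g = p g)
    (horth : ∀ g h : G, g ≠ h → p g * p h = 0)
    (hsum : ∑ g : G, p g = 1)
    (hequiv : ∀ g h : G, σ g (p h) = p (g * h))
    (Φ : (G → B) → B)
    (hΦ : ∀ f : G → B, Φ f = ∑ g : G, p g * σ g (f g)) :
    -- `Φ` is a ring homomorphism on the corner-valued functions:
    (∀ f₁ f₂ : G → B, (∀ g, p 1 * f₁ g = f₁ g) → (∀ g, p 1 * f₂ g = f₂ g) →
      Φ (f₁ + f₂) = Φ f₁ + Φ f₂ ∧ Φ (f₁ * f₂) = Φ f₁ * Φ f₂) ∧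
    -- `Φ` sends the unit (the constant function `p_e`) to `1`:
    Φ (fun _ => p 1) = 1 ∧
    -- `Φ` is a bijection from the corner-valued functions onto `B`:
    Set.BijOn Φ {f : G → B | ∀ g, p 1 * f g = f g} Set.univ ∧
    -- `G`-equivariance:
    (∀ (g' : G) (f : G → B), σ g' (Φ f) = Φ (fun g => f (g'⁻¹ * g))) := by
  have key : ∀ (a b : B) (g h : G), (p g * a) * (p h * b) = (p g * p h) * (a * b) := by
    intro a b g h
    rw [mul_assoc, ← mul_assoc a, ← hcentral, mul_assoc, ← mul_assoc]
  have hσmul : ∀ (g h : G) (x : B), σ g (σ h x) = σ (g * h) x := by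
    intro g h x
    rw [map_mul]; rfl
  have hσid : ∀ x : B, σ 1 x = x := by
    intro x; rw [map_one]; rfl
  have hextract : ∀ (f : G → B) (h : G), p h * Φ f = p h * σ h (f h) := by
    intro f h
    rw [hΦ, Finset.mul_sum]
    rw [Finset.sum_eq_single h]
    · rw [← mul_assoc, hidem]
    · intro g _ hg
      rw [← mul_assoc, horth h g (Ne.symm hg), zero_mul]
    · intro hh; exact absurd (Finset.mem_univ h) hh
  have hrec : ∀ (f : G → B), (∀ g, p 1 * f g = f g) → ∀ h : G, σ h⁻¹ (p h * Φ f) = f h := by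
    intro f hf h
    rw [hextract, map_mul, hequiv, inv_mul_cancel, hσmul, inv_mul_cancel, map_one]
    exact hf h
  refine ⟨?_, ?_, ⟨fun f _ => Set.mem_univ _, ?_, ?_⟩, ?_⟩
  · intro f₁ f₂ _ _
    constructor
    · simp only [hΦ, Pi.add_apply, map_add, mul_add, Finset.sum_add_distrib]
    · rw [hΦ, hΦ, hΦ, Finset.sum_mul_sum]
      refine Finset.sum_congr rfl fun g _ => ?_
      rw [Finset.sum_eq_single g]
      · rw [key, hidem, Pi.mul_apply, map_mul]
      · intro h _ hh
        rw [key, horth g h (Ne.symm hh), zero_mul]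
      · intro hh; exact absurd (Finset.mem_univ g) hh
  · rw [hΦ]
    calc ∑ g : G, p g * σ g (p 1) = ∑ g : G, p g := by
          refine Finset.sum_congr rfl fun g _ => ?_
          rw [hequiv, mul_one, hidem]
      _ = 1 := hsum
  · -- InjOn
    intro f₁ hf₁ f₂ hf₂ heq
    funext h
    rw [← hrec f₁ hf₁ h, ← hrec f₂ hf₂ h, heq]
  · -- SurjOn
    intro b _
    refine ⟨fun g => σ g⁻¹ (p g * b), ?_, ?_⟩
    · intro g
      have : p 1 = σ g⁻¹ (p g) := by rw [hequiv, inv_mul_cancel]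
      rw [this, ← map_mul, ← mul_assoc, hidem]
    · rw [hΦ]
      calc ∑ g : G, p g * σ g (σ g⁻¹ (p g * b)) = ∑ g : G, p g * b := by
            refine Finset.sum_congr rfl fun g _ => ?_
            rw [hσmul, mul_inv_cancel, hσid, ← mul_assoc, hidem]
        _ = b := by rw [← Finset.sum_mul, hsum, one_mul]
  · intro g' f
    rw [hΦ, map_sum, hΦ]
    refine Fintype.sum_equiv (Equiv.mulLeft g') _ _ fun g => ?_
    simp only [Equiv.coe_mulLeft]
    rw [map_mul, hequiv, hσmul, inv_mul_cancel_left]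
end

section
/- Let G be a finite group acting on a unital ring B by ring automorphisms g ↦ σ_g, and let (p_g)_{g∈G} be a family of central idempotents of B such that p_g·p_h = 0 for g ≠ h, ∑_{g∈G} p_g = 1, and σ_g(p_h) = p_{gh} for all g, h ∈ G. Let B^G = {a ∈ B | σ_g(a) = a for all g} be the fixed subring and e the identity of G. Then the map B^G → p_e·B, a ↦ p_e·a, is a bijective ring homomorphism onto the corner p_e·B (a ring with unit p_e), with inverse given by b ↦ ∑_{g∈G} p_g·σ_g(b). -/
open scoped BigOperators

/-- In the setting of a finite group `G` acting on a unital ring `B` by ring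
automorphisms with an equivariant family of orthogonal central idempotents `(p_g)`
summing to `1`, the map `a ↦ p_e·a` is a bijective ring homomorphism from the fixed
subring `B^G` onto the corner `p_e·B` (whose unit is `p_e`), with inverse
`b ↦ ∑_g p_g·σ_g(b)`. -/
theorem stmt13 (G : Type*) [Group G] [Fintype G] (B : Type*) [Ring B]
    (σ : G →* RingAut B) (p : G → B)
    (hcentral : ∀ (g : G) (b : B), p g * b = b * p g)
    (hidem : ∀ g : G, p g * p g = p g)
    (horth : ∀ g h : G, g ≠ h → p g * p h = 0)
    (hsum : ∑ g : G, p g = 1)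
    (hequiv : ∀ g h : G, σ g (p h) = p (g * h))
    (Ψ : B → B) (hΨ : ∀ a : B, Ψ a = p 1 * a) :
    -- `Ψ` is a ring homomorphism on the fixed subring:
    (∀ a₁ a₂ : B, (∀ g : G, σ g a₁ = a₁) → (∀ g : G, σ g a₂ = a₂) →
      Ψ (a₁ + a₂) = Ψ a₁ + Ψ a₂ ∧ Ψ (a₁ * a₂) = Ψ a₁ * Ψ a₂) ∧
    -- `Ψ` sends `1` to the unit `p_e` of the corner:
    Ψ 1 = p 1 ∧
    -- `Ψ` is a bijection from the fixed subring onto the corner `p_e·B`: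
    Set.BijOn Ψ {a : B | ∀ g : G, σ g a = a} {b : B | p 1 * b = b} ∧
    -- `b ↦ ∑_g p_g·σ_g(b)` is a two-sided inverse:
    (∀ a : B, (∀ g : G, σ g a = a) → ∑ g : G, p g * σ g (Ψ a) = a) ∧
    (∀ b : B, p 1 * b = b →
      Ψ (∑ g : G, p g * σ g b) = b ∧
      (∀ g' : G, σ g' (∑ g : G, p g * σ g b) = ∑ g : G, p g * σ g b)) := by
  have hσ1 : ∀ b : B, σ 1 b = b := fun b => by rw [map_one σ]; rfl
  -- left inverse on fixed points
  have hinvL : ∀ a : B, (∀ g : G, σ g a = a) → ∑ g : G, p g * σ g (Ψ a) = a := by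
    intro a ha
    have h1 : ∀ g : G, p g * σ g (Ψ a) = p g * a := by
      intro g
      rw [hΨ, map_mul, hequiv, mul_one, ha g, ← mul_assoc, hidem]
    calc ∑ g : G, p g * σ g (Ψ a) = ∑ g : G, p g * a :=
          Finset.sum_congr rfl fun g _ => h1 g
      _ = (∑ g : G, p g) * a := (Finset.sum_mul _ _ _).symm
      _ = a := by rw [hsum, one_mul]
  -- right inverse on the corner
  have hcorner : ∀ b : B, p 1 * b = b → Ψ (∑ g : G, p g * σ g b) = b := by
    intro b hb
    rw [hΨ, Finset.mul_sum]
    rw [Finset.sum_eq_single (1 : G)]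
    · rw [hσ1, ← mul_assoc, hidem, hb]
    · intro g _ hg
      rw [← mul_assoc, horth 1 g hg.symm, zero_mul]
    · intro h; exact absurd (Finset.mem_univ _) h
  -- Φ b is fixed
  have hfix : ∀ b : B, ∀ g' : G,
      σ g' (∑ g : G, p g * σ g b) = ∑ g : G, p g * σ g b := by
    intro b g'
    rw [map_sum]
    calc ∑ g : G, σ g' (p g * σ g b)
        = ∑ g : G, p (g' * g) * σ (g' * g) b := by
          refine Finset.sum_congr rfl fun g _ => ?_
          rw [map_mul, hequiv]
          congr 1
          rw [map_mul σ]; rfl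
      _ = ∑ g : G, p g * σ g b :=
          Fintype.sum_equiv (Equiv.mulLeft g')
            (fun g => p (g' * g) * σ (g' * g) b) (fun g => p g * σ g b)
            (fun g => rfl)
  refine ⟨?_, ?_, ?_, hinvL, fun b hb => ⟨hcorner b hb, hfix b⟩⟩
  · intro a₁ a₂ _ _
    constructor
    · rw [hΨ, hΨ, hΨ, mul_add]
    · rw [hΨ, hΨ, hΨ]
      conv_rhs => rw [mul_assoc, ← mul_assoc a₁ (p 1) a₂, ← hcentral 1 a₁,
        ← mul_assoc (p 1) (p 1 * a₁) a₂, ← mul_assoc (p 1) (p 1) a₁, hidem,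
        mul_assoc]
  · rw [hΨ, mul_one]
  · refine ⟨fun a _ => ?_, fun a₁ h₁ a₂ h₂ heq => ?_, fun b hb => ?_⟩
    · show p 1 * Ψ a = Ψ a
      rw [hΨ, ← mul_assoc, hidem]
    · calc a₁ = ∑ g : G, p g * σ g (Ψ a₁) := (hinvL a₁ h₁).symm
        _ = ∑ g : G, p g * σ g (Ψ a₂) := by rw [heq]
        _ = a₂ := hinvL a₂ h₂
    · exact ⟨∑ g : G, p g * σ g b, hfix b, hcorner b hb⟩
end

section
/- Let 𝒯 be a pretriangulated category admitting countable products and countable coproducts. For an object X write ⨁X for the coproduct and ∏X for the product of countably many copies of X, κ_X : ⨁X → ∏X for the canonical morphism, and Δ_X : X → ∏X for the diagonal. Suppose given objects C, P, Q and morphisms d : C → P, u : P → ∏C, e : ⨁C → P, q : P → Q such that u ∘ d = Δ_C, u ∘ e = κ_C, and such that ⨁C →^e P →^q Q → (⨁C)[1] is a distinguished triangle. Then for every object D and every morphism f : D → C with q ∘ d ∘ f = 0, there exists a morphism φ : D → ⨁C with e ∘ φ = d ∘ f, and any such φ satisfies π_n ∘ κ_C ∘ φ = f for every n ∈ ℕ,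 where π_n : ∏C → C is the n-th projection. -/
open CategoryTheory CategoryTheory.Limits CategoryTheory.Pretriangulated

lemma comp_eq_comp_of_comp_eq_comp {T : Type*} [Category T] {D C X P Y : T}
    {f : D ⟶ C} {d : C ⟶ P} {φ : D ⟶ X} {e : X ⟶ P} {u : P ⟶ Y}
    {a : C ⟶ Y} {b : X ⟶ Y}
    (hud : d ≫ u = a) (hue : e ≫ u = b) (h : φ ≫ e = f ≫ d) : φ ≫ b = f ≫ a := by
  rw [← hue, ← hud, ← Category.assoc, h, Category.assoc]

/-- In a pretriangulated category with countable products and coproducts, suppose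
`d : C → P`, `u : P → ∏C`, `e : ⨁C → P`, `q : P → Q` satisfy `u ∘ d = Δ_C`,
`u ∘ e = κ_C`, and `⨁C → P → Q → (⨁C)[1]` is a distinguished triangle. Then every
morphism `f : D → C` with `q ∘ d ∘ f = 0` lifts through `e` to some `φ : D → ⨁C`
with `e ∘ φ = d ∘ f`, and any such `φ` satisfies `π_n ∘ κ_C ∘ φ = f` for all `n`,
i.e. `f` is a summable phantom map. -/
theorem stmt14 {T : Type*} [Category T] [Preadditive T] [HasZeroObject T]
    [HasShift T ℤ] [∀ n : ℤ, (shiftFunctor T n).Additive] [Pretriangulated T]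
    [HasCountableProducts T] [HasCountableCoproducts T]
    (C P Q : T)
    (d : C ⟶ P) (u : P ⟶ ∏ᶜ fun _ : ℕ => C) (e : (∐ fun _ : ℕ => C) ⟶ P)
    (q : P ⟶ Q) (w : Q ⟶ (∐ fun _ : ℕ => C)⟦(1 : ℤ)⟧)
    (hud : d ≫ u = Pi.lift fun _ => 𝟙 C)
    (hue : e ≫ u = Limits.Sigma.desc fun m => Pi.lift fun n => if m = n then 𝟙 C else 0)
    (htri : Triangle.mk e q w ∈ distTriang T)
    (D : T) (f : D ⟶ C) (hf : f ≫ d ≫ q = 0) :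
    (∃ φ : D ⟶ ∐ fun _ : ℕ => C, φ ≫ e = f ≫ d) ∧
    (∀ φ : D ⟶ ∐ fun _ : ℕ => C, φ ≫ e = f ≫ d →
      ∀ n : ℕ,
        φ ≫ (Limits.Sigma.desc fun m => Pi.lift fun n' => if m = n' then 𝟙 C else 0) ≫
          Pi.π (fun _ : ℕ => C) n = f) := by
  refine ⟨?_, fun φ hφ n => ?_⟩
  · obtain ⟨φ, hφ⟩ := Triangle.coyoneda_exact₂ _ htri (f ≫ d)
      ((Category.assoc _ _ _).trans hf)
    exact ⟨φ, hφ.symm⟩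
  · rw [← Category.assoc, comp_eq_comp_of_comp_eq_comp hud hue hφ, Category.assoc, Pi.lift_π,
      Category.comp_id]
end

section
/- Let 𝒜 be an additive category admitting countable products and countable coproducts. For an object X write ⨁X for the coproduct and ∏X for the product of countably many copies of X, κ_X : ⨁X → ∏X for the canonical morphism, and π_n : ∏X → X for the n-th projection. Let f : C → D be a morphism and f̂ : C → ⨁D a morphism with π_n ∘ κ_D ∘ f̂ = f for all n ∈ ℕ. If g : X → C is a morphism such that f̂ ∘ g factors through the canonical inclusion ⨁_{i<k} D → ⨁D of a finite subcoproduct for some k ∈ ℕ, then f ∘ g = 0. -/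
open CategoryTheory CategoryTheory.Limits

/-- In an additive category with countable products and coproducts, let `f : C → D`
be a summable phantom map, witnessed by `f̂ : C → ⨁D` with `π_n ∘ κ_D ∘ f̂ = f` for all
`n`. If `g : X → C` is such that `f̂ ∘ g` factors through the inclusion of a finite
subcoproduct `⨁_{i<k} D → ⨁D`, then `f ∘ g = 0`. -/
theorem stmt15 {A : Type*} [Category A] [Preadditive A] [HasFiniteBiproducts A]
    [HasCountableProducts A] [HasCountableCoproducts A]
    (C D X : A) (f : C ⟶ D) (fhat : C ⟶ ∐ fun _ : ℕ => D)
    (hfhat : ∀ n : ℕ,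
      fhat ≫ (Limits.Sigma.desc fun m => Pi.lift fun n' => if m = n' then 𝟙 D else 0) ≫
        Pi.π (fun _ : ℕ => D) n = f)
    (g : X ⟶ C) (k : ℕ)
    (hfactor : ∃ h : X ⟶ ∐ fun _ : Fin k => D,
      h ≫ Limits.Sigma.desc (fun i : Fin k => Limits.Sigma.ι (fun _ : ℕ => D) (i : ℕ)) =
        g ≫ fhat) :
    g ≫ f = 0 := by
  obtain ⟨h, hh⟩ := hfactor
  have : g ≫ f = h ≫ (Limits.Sigma.desc fun i : Fin k => Limits.Sigma.ι (fun _ : ℕ => D) (i : ℕ)) ≫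
      (Limits.Sigma.desc fun m => Pi.lift fun n' => if m = n' then 𝟙 D else 0) ≫
        Pi.π (fun _ : ℕ => D) k := by
    rw [← hfhat k, ← Category.assoc, ← hh, Category.assoc]
  rw [this]
  have hz : ∀ i : Fin k,
      Limits.Sigma.ι (fun _ : ℕ => D) (i : ℕ) ≫
        (Limits.Sigma.desc fun m => Pi.lift fun n' => if m = n' then 𝟙 D else 0) ≫
          Pi.π (fun _ : ℕ => D) k = 0 := by
    intro i
    rw [← Category.assoc, Limits.Sigma.ι_desc, limit.lift_π]
    simp [Nat.ne_of_lt i.isLt]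
  rw [← Category.assoc]
  have : (Limits.Sigma.desc fun i : Fin k => Limits.Sigma.ι (fun _ : ℕ => D) (i : ℕ)) ≫
      (Limits.Sigma.desc fun m => Pi.lift fun n' => if m = n' then 𝟙 D else 0) ≫
        Pi.π (fun _ : ℕ => D) k = 0 := by
    ext i
    simp [hz i]
  rw [Category.assoc, this, comp_zero]
end
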